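/- Assume $f$ is continuous, $\vartheta > 2$, $\tau \in (1, q/(q-2))$ with $q > 2$, and: (i) $0 < \vartheta F(x,u) \le u f(x,u)$ for $u \neq 0$ where $F(x,u) = \int_0^u f(x,s)ds$; (ii) $|f(x,u)| \le C|u|^{q-1}$ for $|u|$ large. Then there exists $R > 0$ such that for all $x \in \mathbb{R}^N$ and $|u| \ge R$, $|f(x,u)|^\tau / |u|^\tau \le \tfrac12 u f(x,u) - F(x,u)$. -/

import Mathlib

/-!
The Ambrosetti–Rabinowitz condition gives `½ u f - F ≥ (½ - 1/θ) |u| |f|`, while the growth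
bound gives `|f|^τ / |u|^τ ≤ C^(τ-1) |u|^((q-1)(τ-1) - τ) |f|`. The condition `τ < q/(q-2)` says
exactly that `(q-1)(τ-1) - τ < 1`, so the second quantity is dominated by the first for large `|u|`.
-/

open Filter Topology Real

theorem eventually_mul_rpow_le_mul_rpow {a b : ℝ} (hab : a < b) (K : ℝ) {c : ℝ} (hc : 0 < c) :
    ∀ᶠ s in atTop, K * s ^ a ≤ c * s ^ b := by
  have hlim : Tendsto (fun s : ℝ => K * s ^ (-(b - a))) atTop (𝓝 0) := by
    simpa using (tendsto_rpow_neg_atTop (sub_pos.2 hab)).const_mul K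
  filter_upwards [hlim.eventually (gt_mem_nhds hc), eventually_gt_atTop 0] with s hs hs_pos
  calc K * s ^ a = K * s ^ (-(b - a)) * s ^ b := by
        rw [mul_assoc, ← rpow_add hs_pos]; ring_nf
    _ ≤ c * s ^ b := by gcongr

theorem rpow_div_rpow_le_of_le_mul_rpow {s y C c q τ : ℝ} (hτ : 1 ≤ τ) (hs : 0 < s) (hy : 0 < y)
    (hC : 0 ≤ C) (hyC : y ≤ C * s ^ (q - 1))
    (hs_large : C ^ (τ - 1) * s ^ ((q - 1) * (τ - 1)) ≤ c * s ^ (τ + 1)) :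
    y ^ τ / s ^ τ ≤ c * (s * y) := by
  rw [div_le_iff₀ (rpow_pos_of_pos hs τ)]
  have hτ' : 0 ≤ τ - 1 := sub_nonneg.2 hτ
  calc y ^ τ = y ^ (τ - 1) * y := by rw [rpow_sub_one hy.ne', div_mul_cancel₀ _ hy.ne']
    _ ≤ (C * s ^ (q - 1)) ^ (τ - 1) * y := by gcongr
    _ = C ^ (τ - 1) * s ^ ((q - 1) * (τ - 1)) * y := by
        rw [mul_rpow hC (rpow_nonneg hs.le _), ← rpow_mul hs.le]
    _ ≤ c * s ^ (τ + 1) * y := by gcongr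
    _ = c * (s * y) * s ^ τ := by rw [rpow_add hs, rpow_one]; ring

theorem half_sub_inv_mul_le_half_mul_sub {θ a F : ℝ} (hθ : 0 < θ) (h : θ * F ≤ a) :
    (1 / 2 - 1 / θ) * a ≤ 1 / 2 * a - F := by
  have hF : F ≤ a / θ := by rw [le_div_iff₀ hθ]; linarith
  have hsplit : (1 / 2 - 1 / θ) * a = 1 / 2 * a - a / θ := by ring
  linarith

theorem mul_sub_one_lt_add_one_of_lt_div {q τ : ℝ} (hq : 2 < q) (hτ : τ < q / (q - 2)) :
    (q - 1) * (τ - 1) < τ + 1 := by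
  have h := (lt_div_iff₀ (sub_pos.2 hq)).1 hτ
  nlinarith

theorem stmt_3_general {N : ℕ} (q τ θ C : ℝ) (hq : 2 < q) (hθ : 2 < θ)
    (hτ1 : 1 < τ) (hτ : τ < q / (q - 2)) (hC : 0 < C)
    (f : (Fin N → ℝ) → ℝ → ℝ)
    (F : (Fin N → ℝ) → ℝ → ℝ)
    (hAR : ∀ x u, u ≠ 0 → 0 < θ * F x u ∧ θ * F x u ≤ u * f x u)
    (hgrowth : ∃ M : ℝ, ∀ x u, M ≤ |u| → |f x u| ≤ C * |u| ^ (q - 1)) :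
    ∃ R : ℝ, 0 < R ∧ ∀ x u, R ≤ |u| →
      |f x u| ^ τ / |u| ^ τ ≤ 1/2 * (u * f x u) - F x u := by
  obtain ⟨M, hM⟩ := hgrowth
  have hc : 0 < 1 / 2 - 1 / θ := by
    have : 1 / θ < 1 / 2 := one_div_lt_one_div_of_lt two_pos hθ
    linarith
  obtain ⟨R₀, hR₀⟩ := eventually_atTop.1 <|
    eventually_mul_rpow_le_mul_rpow (mul_sub_one_lt_add_one_of_lt_div hq hτ) (C ^ (τ - 1)) hc
  refine ⟨max (max M R₀) 1, by positivity, fun x u hu => ?_⟩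
  have hu_max := max_le_iff.1 hu
  have hu_pos : 0 < |u| := by linarith
  obtain ⟨hF_pos, hF_le⟩ := hAR x u (abs_pos.1 hu_pos)
  have huf : |u| * |f x u| = u * f x u := by
    rw [← abs_mul, abs_of_pos (hF_pos.trans_le hF_le)]
  have hf_pos : 0 < |f x u| := pos_of_mul_pos_right (huf ▸ hF_pos.trans_le hF_le) hu_pos.le
  calc |f x u| ^ τ / |u| ^ τ ≤ (1 / 2 - 1 / θ) * (|u| * |f x u|) :=
        rpow_div_rpow_le_of_le_mul_rpow hτ1.le hu_pos hf_pos hC.le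
          (hM x u (le_max_left _ _ |>.trans hu_max.1)) (hR₀ _ (le_max_right _ _ |>.trans hu_max.1))
    _ = (1 / 2 - 1 / θ) * (u * f x u) := by rw [huf]
    _ ≤ 1 / 2 * (u * f x u) - F x u := half_sub_inv_mul_le_half_mul_sub (by linarith) hF_le

theorem stmt_3 {N : ℕ} (q τ θ C : ℝ) (hq : 2 < q) (hθ : 2 < θ)
    (hτ1 : 1 < τ) (hτ : τ < q / (q - 2)) (hC : 0 < C)
    (f : (Fin N → ℝ) → ℝ → ℝ) (hf : Continuous (fun p : (Fin N → ℝ) × ℝ => f p.1 p.2))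
    (F : (Fin N → ℝ) → ℝ → ℝ) (hF : ∀ x u, F x u = ∫ s in (0:ℝ)..u, f x s)
    (hAR : ∀ x u, u ≠ 0 → 0 < θ * F x u ∧ θ * F x u ≤ u * f x u)
    (hgrowth : ∃ M : ℝ, ∀ x u, M ≤ |u| → |f x u| ≤ C * |u| ^ (q - 1)) :
    ∃ R : ℝ, 0 < R ∧ ∀ x u, R ≤ |u| →
      |f x u| ^ τ / |u| ^ τ ≤ 1/2 * (u * f x u) - F x u :=
  stmt_3_general q τ θ C hq hθ hτ1 hτ hC f F hAR hgrowth
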